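/- (Theorem 5(i), structural form.) Let K ≥ 1, let R be an invertible 3×3 real matrix (e.g., a rotation matrix), and let Δ¹,…,Δᴷ be nonzero vectors in ℝ³ such that for every k ∈ {2,…,K} there exists a nonzero real ε_{k−1} with Δᵏ = ε_{k−1}·Δᵏ⁻¹ (i.e., the source positions are collinear with the origin of the array frame). For each k define the 3×3 real matrix Uᵏ = −Rᵀ·((‖Δᵏ‖²·I₃ − Δᵏ(Δᵏ)ᵀ)/‖Δᵏ‖³). Then the (3K)×3 matrix obtained by vertically stacking U¹,…,Uᴷ has rank exactly 2; in particular it does not have full column rank 3. -/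

import Mathlib

/-!
Every `Δᵏ` is a nonzero multiple of `d = Δ¹`, and `‖Δ‖² I - ΔΔᵀ` is homogeneous of degree two in `Δ`,
so each block `Uᵏ` is a nonzero multiple of `M = Rᵀ((d ⬝ d) I - d dᵀ)` and the rows of the stack span
the same space as the rows of `M`. As `R` is invertible, `rank M` is the rank of `(d ⬝ d) I - d dᵀ`,
whose kernel is the line through `d`; so it is `3 - 1`.
-/

open Matrix

theorem exists_ne_zero_smul_eq_first_of_consecutive {K V : Type*} [Semiring K] [NoZeroDivisors K]
    [Nontrivial K] [AddCommMonoid V] [Module K V] {N : ℕ} (hN : 0 < N) (f : Fin N → V)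
    (h : ∀ k l : Fin N, (l : ℕ) + 1 = k → ∃ ε : K, ε ≠ 0 ∧ f k = ε • f l) :
    ∀ k, ∃ ε : K, ε ≠ 0 ∧ f k = ε • f ⟨0, hN⟩ := by
  rintro ⟨k, hk⟩
  induction k with
  | zero => exact ⟨1, one_ne_zero, (one_smul K _).symm⟩
  | succ k ih =>
    obtain ⟨ε, hε, hstep⟩ := h ⟨k + 1, hk⟩ ⟨k, by omega⟩ rfl
    obtain ⟨δ, hδ, hfirst⟩ := ih (by omega)
    exact ⟨ε * δ, mul_ne_zero hε hδ, by rw [hstep, hfirst, smul_smul]⟩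

theorem EuclideanSpace.norm_sq_eq_dotProduct {n : Type*} [Fintype n] (v : EuclideanSpace ℝ n) :
    ‖v‖ ^ 2 = v.ofLp ⬝ᵥ v.ofLp := by
  rw [← real_inner_self_eq_norm_sq, EuclideanSpace.inner_eq_star_dotProduct, star_trivial]

namespace Matrix

variable {n K : Type*} [Fintype n] [DecidableEq n] [Field K]

theorem smul_dotProduct_smul_one_sub_vecMulVec (ε : K) (d : n → K) :
    ((ε • d) ⬝ᵥ (ε • d)) • (1 : Matrix n n K) - vecMulVec (ε • d) (ε • d) =
      ε ^ 2 • ((d ⬝ᵥ d) • (1 : Matrix n n K) - vecMulVec d d) := by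
  rw [smul_dotProduct, dotProduct_smul, smul_vecMulVec, vecMulVec_smul]
  module

theorem ker_mulVecLin_smul_one_sub_vecMulVec_self {d : n → K} (hd : d ⬝ᵥ d ≠ 0) :
    LinearMap.ker ((d ⬝ᵥ d) • (1 : Matrix n n K) - vecMulVec d d).mulVecLin = K ∙ d := by
  ext v
  have hmulVec : ((d ⬝ᵥ d) • (1 : Matrix n n K) - vecMulVec d d) *ᵥ v =
      (d ⬝ᵥ d) • v - (d ⬝ᵥ v) • d := by
    rw [sub_mulVec, smul_mulVec, one_mulVec, vecMulVec_mulVec, op_smul_eq_smul]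
  rw [LinearMap.mem_ker, mulVecLin_apply, hmulVec, sub_eq_zero, Submodule.mem_span_singleton]
  constructor
  · intro h
    exact ⟨(d ⬝ᵥ d)⁻¹ * (d ⬝ᵥ v), by rw [mul_smul, ← h, inv_smul_smul₀ hd]⟩
  · rintro ⟨a, rfl⟩
    rw [dotProduct_smul, smul_eq_mul, smul_smul, mul_comm]

theorem rank_smul_one_sub_vecMulVec_self {d : n → K} (hd : d ⬝ᵥ d ≠ 0) :
    ((d ⬝ᵥ d) • (1 : Matrix n n K) - vecMulVec d d).rank = Fintype.card n - 1 := by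
  have hd₀ : d ≠ 0 := by
    rintro rfl
    exact hd (zero_dotProduct 0)
  have hrank := LinearMap.finrank_range_add_finrank_ker
    ((d ⬝ᵥ d) • (1 : Matrix n n K) - vecMulVec d d).mulVecLin
  rw [ker_mulVecLin_smul_one_sub_vecMulVec_self hd, finrank_span_singleton hd₀,
    Module.finrank_fintype_fun_eq_card] at hrank
  rw [rank]
  omega

omit [DecidableEq n] in
theorem rank_eq_of_blocks_eq_smul {ι m : Type*} [Finite ι] [Nonempty ι] [Finite m]
    {S : Matrix (ι × m) n K} {M : Matrix m n K} {c : ι → K} (hc : ∀ k, c k ≠ 0)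
    (hS : ∀ k r, S (k, r) = c k • M r) : S.rank = M.rank := by
  suffices Submodule.span K (Set.range S.row) = Submodule.span K (Set.range M.row) by
    rw [rank_eq_finrank_span_row, rank_eq_finrank_span_row, this]
  apply le_antisymm <;> rw [Submodule.span_le]
  · rintro _ ⟨⟨k, r⟩, rfl⟩
    change S (k, r) ∈ _
    rw [hS]
    exact Submodule.smul_mem _ _ (Submodule.subset_span ⟨r, rfl⟩)
  · rintro _ ⟨r, rfl⟩
    obtain ⟨k⟩ := ‹Nonempty ι›
    change M r ∈ _
    rw [← inv_smul_smul₀ (hc k) (M r), ← hS]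
    exact Submodule.smul_mem _ _ (Submodule.subset_span ⟨(k, r), rfl⟩)

end Matrix

theorem stacked_U_rank_two_of_collinear
    (K : ℕ) (hK : 1 ≤ K)
    (R : Matrix (Fin 3) (Fin 3) ℝ) (hR : IsUnit R.det)
    (Δ : Fin K → EuclideanSpace ℝ (Fin 3))
    (hΔ : ∀ k, Δ k ≠ 0)
    (hcol : ∀ k l : Fin K, (l : ℕ) + 1 = (k : ℕ) →
      ∃ ε : ℝ, ε ≠ 0 ∧ Δ k = ε • Δ l)
    (U : Fin K → Matrix (Fin 3) (Fin 3) ℝ)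
    (hU : ∀ k, U k = -((‖Δ k‖ ^ 3)⁻¹ •
      (Rᵀ * ((‖Δ k‖ ^ 2 • (1 : Matrix (Fin 3) (Fin 3) ℝ)) -
        Matrix.vecMulVec (fun i => Δ k i) (fun j => Δ k j)))))
    (S : Matrix (Fin K × Fin 3) (Fin 3) ℝ)
    (hS : ∀ (k : Fin K) (r c : Fin 3), S (k, r) c = U k r c) :
    S.rank = 2 := by
  have : Nonempty (Fin K) := ⟨⟨0, hK⟩⟩
  set d := (Δ ⟨0, hK⟩).ofLp
  have hd : d ⬝ᵥ d ≠ 0 := by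
    rw [← EuclideanSpace.norm_sq_eq_dotProduct]
    exact pow_ne_zero 2 (norm_ne_zero_iff.mpr (hΔ _))
  set M := Rᵀ * ((d ⬝ᵥ d) • (1 : Matrix (Fin 3) (Fin 3) ℝ) - vecMulVec d d)
  have hblock : ∀ k, ∃ c : ℝ, c ≠ 0 ∧ U k = c • M := by
    intro k
    obtain ⟨ε, hε, hk⟩ := exists_ne_zero_smul_eq_first_of_consecutive hK Δ hcol k
    refine ⟨-((‖Δ k‖ ^ 3)⁻¹ * ε ^ 2), by simp [hΔ k, hε], ?_⟩
    rw [hU k, EuclideanSpace.norm_sq_eq_dotProduct (Δ k), hk, WithLp.ofLp_smul,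
      smul_dotProduct_smul_one_sub_vecMulVec, Matrix.mul_smul, smul_smul, neg_smul]
  choose c hc hUc using hblock
  calc S.rank = M.rank := rank_eq_of_blocks_eq_smul hc fun k r => by ext j; simp [hS, hUc]
    _ = ((d ⬝ᵥ d) • (1 : Matrix (Fin 3) (Fin 3) ℝ) - vecMulVec d d).rank :=
      rank_mul_eq_right_of_isUnit_det _ _ (by rwa [det_transpose])
    _ = 2 := rank_smul_one_sub_vecMulVec_self hd
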